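/- For multisegments, if ε_i(M) + ε_i*(M) + ⟨wt(M), α_i^∨⟩ = 0, then f_i(M) = f_i*(M); in fact both operators add a new segment [i,i] to M. -/
import Mathlib


/-- A segment `[a,b]` is a pair of integers. -/
abbrev Seg : Type := ℕ × ℕ

/-- A multisegment is a finite multiset of segments. -/
abbrev MS : Type := Multiset Seg

/-- `M ∈ MS_n`: all segments `[a,b]` satisfy `1 ≤ a ≤ b ≤ n`. -/
def IsMS (n : ℕ) (M : MS) : Prop := ∀ s ∈ M, 1 ≤ s.1 ∧ s.1 ≤ s.2 ∧ s.2 ≤ n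

/-- A bracket: `op` = "(", `cl` = ")". -/
inductive Br | op | cl
deriving DecidableEq

/-- One step of the left-to-right bracket cancellation procedure.  The state
`(cls, ops)` records the tags of the currently uncanceled ")" (in order) and the
currently uncanceled "(" (in order).  A new "(" is appended to `ops`; a new ")"
cancels the last uncanceled "(" if there is one, and otherwise is appended to `cls`. -/
def step {τ : Type} : (List τ × List τ) → (Br × τ) → (List τ × List τ)
  | (cls, ops), (Br.op, s) => (cls, ops ++ [s])
  | (cls, ops), (Br.cl, s) => if ops.isEmpty then (cls ++ [s], ops) else (cls, ops.dropLast)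

/-- Process a tagged bracket string; the result `(cls, ops)` lists the tags of the
uncanceled ")" and the uncanceled "(" (left to right).  The reduced (uncanceled)
string is `")"^cls.length ++ "("^ops.length`. -/
def scan {τ : Type} (l : List (Br × τ)) : List τ × List τ := l.foldl step ([], [])

/-- Number of uncanceled ")" in a tagged bracket string. -/
def urStr {τ : Type} (l : List (Br × τ)) : ℕ := (scan l).1.length

/-- Number of uncanceled "(" in a tagged bracket string. -/
def epsStr {τ : Type} (l : List (Br × τ)) : ℕ := (scan l).2.length

/-- Tag of the rightmost uncanceled ")", if any. -/
def lastCl {τ : Type} (l : List (Br × τ)) : Option τ := (scan l).1.getLast?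

/-- Tag of the leftmost uncanceled "(", if any. -/
def headOp {τ : Type} (l : List (Br × τ)) : Option τ := (scan l).2.head?

/-- The string `S_i(M)`: segments are ordered by increasing height, then by
decreasing lower endpoint; each `[h,i]` contributes "(" and each `[h,i-1]`
contributes ")".  In the block of segments of height `t` the "(" over the
`[i-t+1, i]` segments come immediately before the ")" over the `[i-t, i-1]`
segments, and blocks appear for `t = 1, 2, …`. -/
def Si (M : MS) (i : ℕ) : List (Br × Seg) :=
  (List.range i).flatMap fun t0 =>
    let t := t0 + 1
    List.replicate (M.count (i - t + 1, i)) (Br.op, ((i - t + 1 : ℕ), i)) ++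
    List.replicate (M.count (i - t, i - 1)) (Br.cl, ((i - t : ℕ), i - 1))

/-- The string `S_i^*(M)`: segments ordered by increasing height, then by
increasing lower endpoint; each `[i,j]` contributes "(" and each `[i+1,j]`
contributes ")".  In the block of height `t` the "(" below the `[i, i+t-1]`
segments come immediately before the ")" below the `[i+1, i+t]` segments. -/
def SiStar (n : ℕ) (M : MS) (i : ℕ) : List (Br × Seg) :=
  (List.range n).flatMap fun t0 =>
    let t := t0 + 1
    List.replicate (M.count (i, i + t - 1)) (Br.op, (i, i + t - 1)) ++
    List.replicate (M.count (i + 1, i + t)) (Br.cl, (i + 1, i + t))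

/-- The crystal operator `f_i` on multisegments: it changes the segment `[h,i-1]`
under the rightmost uncanceled ")" of `S_i(M)` into `[h,i]`, or adds a new
segment `[i,i]` if there is no uncanceled ")". -/
def fM (i : ℕ) (M : MS) : MS :=
  match lastCl (Si M i) with
  | some s => M.erase s + {(s.1, i)}
  | none => M + {(i, i)}

/-- The crystal operator `e_i` on multisegments: it changes the segment `[h,i]`
under the leftmost uncanceled "(" of `S_i(M)` into `[h,i-1]` (deleting it when
`h = i`), or returns `none` (i.e. `0`) if there is no uncanceled "(". -/
def eM (i : ℕ) (M : MS) : Option MS :=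
  match headOp (Si M i) with
  | some s => some (if s.1 = i then M.erase s else M.erase s + {(s.1, i - 1)})
  | none => none

/-- The operator `f_i^*`: it changes the segment `[i+1,j]` under the rightmost
uncanceled ")" of `S_i^*(M)` into `[i,j]`, or adds `[i,i]` if there is none. -/
def fMStar (n i : ℕ) (M : MS) : MS :=
  match lastCl (SiStar n M i) with
  | some s => M.erase s + {(i, s.2)}
  | none => M + {(i, i)}

/-- The operator `e_i^*`: it changes the segment `[i,j]` under the leftmost
uncanceled "(" of `S_i^*(M)` into `[i+1,j]` (deleting it when `j = i`), or
returns `none` if there is no uncanceled "(". -/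
def eMStar (n i : ℕ) (M : MS) : Option MS :=
  match headOp (SiStar n M i) with
  | some s => some (if s.2 = i then M.erase s else M.erase s + {(i + 1, s.2)})
  | none => none

/-- The number of boxes labeled `j` in `M`: each segment `[a,b]` contains one
box labeled `j` for each `a ≤ j ≤ b`. -/
def boxes (M : MS) (j : ℕ) : ℕ :=
  (M.filter (fun s => s.1 ≤ j ∧ j ≤ s.2)).card

/-- The pairing `⟨wt(M), α_i^∨⟩ = #(boxes i-1) + #(boxes i+1) - 2 #(boxes i)`. -/
def wtPair (M : MS) (i : ℕ) : ℤ :=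
  (boxes M (i - 1) : ℤ) + (boxes M (i + 1) : ℤ) - 2 * (boxes M i : ℤ)


section Aux

lemma scan_balance {τ : Type} : ∀ (l : List (Br × τ)) (c o : List τ),
    (l.foldl step (c, o)).2.length + l.countP (fun p => p.1 == Br.cl) + c.length
      = (l.foldl step (c, o)).1.length + l.countP (fun p => p.1 == Br.op) + o.length := by
  intro l
  induction l with
  | nil => intro c o; simp; omega
  | cons hd tl ih =>
    intro c o
    obtain ⟨b, s⟩ := hd
    cases b with
    | op =>
      have := ih c (o ++ [s])
      simp only [List.foldl_cons, step, List.countP_cons] at *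
      simp at *
      omega
    | cl =>
      cases o with
      | nil =>
        have := ih (c ++ [s]) []
        simp only [List.foldl_cons, step, List.countP_cons] at *
        simp at *
        omega
      | cons x xs =>
        have := ih c ((x :: xs).dropLast)
        simp only [List.foldl_cons, step, List.countP_cons] at *
        simp [List.length_dropLast] at *
        omega

lemma countP_repl {α : Type} (p : α → Bool) (n : ℕ) (a : α) :
    (List.replicate n a).countP p = if p a then n else 0 := by
  simp [List.countP_eq_length_filter, List.filter_replicate]
  split <;> simp

lemma sum_count_eq (k : ℕ) (f : ℕ → Seg) (p : Seg → Prop) [DecidablePred p]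
    (H : ∀ a : Seg, ((Finset.range k).filter (fun t0 => f t0 = a)).card
        = if p a then 1 else 0)
    (M : MS) : ∑ t0 ∈ Finset.range k, M.count (f t0) = M.countP p := by
  induction M using Multiset.induction with
  | empty => simp
  | cons a M ih =>
    simp only [Multiset.count_cons, Multiset.countP_cons, Finset.sum_add_distrib, ih]
    congr 1
    rw [← H a, Finset.card_filter]

lemma countP_op_Si (M : MS) (i : ℕ) (hi : 1 ≤ i) :
    (Si M i).countP (fun p => p.1 == Br.op)
      = M.countP (fun s => 1 ≤ s.1 ∧ s.1 ≤ i ∧ s.2 = i) := by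
  rw [Si, List.countP_flatMap]
  simp only [Function.comp_def, List.countP_append, countP_repl]
  simp
  show ∑ t0 ∈ Finset.range i, M.count (i - (t0+1) + 1, i) = _
  apply sum_count_eq
  rintro ⟨x, y⟩
  split
  · next h =>
    rw [show (Finset.range i).filter (fun t0 => ((i - (t0+1) + 1, i) : Seg) = (x, y)) = {i - x}
      from by ext t0; simp [Prod.ext_iff]; omega]
    simp
  · next h =>
    rw [show (Finset.range i).filter (fun t0 => ((i - (t0+1) + 1, i) : Seg) = (x, y)) = ∅
      from by ext t0; simp [Prod.ext_iff]; omega]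
    simp

lemma countP_cl_Si (M : MS) (i : ℕ) (hi : 1 ≤ i) :
    (Si M i).countP (fun p => p.1 == Br.cl)
      = M.countP (fun s => s.1 ≤ i - 1 ∧ s.2 = i - 1) := by
  rw [Si, List.countP_flatMap]
  simp only [Function.comp_def, List.countP_append, countP_repl]
  simp
  show ∑ t0 ∈ Finset.range i, M.count (i - (t0+1), i - 1) = _
  apply sum_count_eq
  rintro ⟨x, y⟩
  split
  · next h =>
    rw [show (Finset.range i).filter (fun t0 => ((i - (t0+1), i - 1) : Seg) = (x, y)) = {i - 1 - x}
      from by ext t0; simp [Prod.ext_iff]; omega]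
    simp
  · next h =>
    rw [show (Finset.range i).filter (fun t0 => ((i - (t0+1), i - 1) : Seg) = (x, y)) = ∅
      from by ext t0; simp [Prod.ext_iff]; omega]
    simp

lemma countP_op_SiStar (n : ℕ) (M : MS) (i : ℕ) :
    (SiStar n M i).countP (fun p => p.1 == Br.op)
      = M.countP (fun s => s.1 = i ∧ i ≤ s.2 ∧ s.2 < i + n) := by
  rw [SiStar, List.countP_flatMap]
  simp only [Function.comp_def, List.countP_append, countP_repl]
  simp
  show ∑ t0 ∈ Finset.range n, M.count (i, i + (t0+1) - 1) = _
  apply sum_count_eq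
  rintro ⟨x, y⟩
  split
  · next h =>
    rw [show (Finset.range n).filter (fun t0 => ((i, i + (t0+1) - 1) : Seg) = (x, y)) = {y - i}
      from by ext t0; simp [Prod.ext_iff]; omega]
    simp
  · next h =>
    rw [show (Finset.range n).filter (fun t0 => ((i, i + (t0+1) - 1) : Seg) = (x, y)) = ∅
      from by ext t0; simp [Prod.ext_iff]; omega]
    simp

lemma countP_cl_SiStar (n : ℕ) (M : MS) (i : ℕ) :
    (SiStar n M i).countP (fun p => p.1 == Br.cl)
      = M.countP (fun s => s.1 = i + 1 ∧ i + 1 ≤ s.2 ∧ s.2 ≤ i + n) := by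
  rw [SiStar, List.countP_flatMap]
  simp only [Function.comp_def, List.countP_append, countP_repl]
  simp
  show ∑ t0 ∈ Finset.range n, M.count (i + 1, i + (t0+1)) = _
  apply sum_count_eq
  rintro ⟨x, y⟩
  split
  · next h =>
    rw [show (Finset.range n).filter (fun t0 => ((i + 1, i + (t0+1)) : Seg) = (x, y)) = {y - i - 1}
      from by ext t0; simp [Prod.ext_iff]; omega]
    simp
  · next h =>
    rw [show (Finset.range n).filter (fun t0 => ((i + 1, i + (t0+1)) : Seg) = (x, y)) = ∅
      from by ext t0; simp [Prod.ext_iff]; omega]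
    simp

lemma boxes_eq_countP (M : MS) (j : ℕ) :
    boxes M j = M.countP (fun s => s.1 ≤ j ∧ j ≤ s.2) := by
  rw [boxes, Multiset.countP_eq_card_filter]

lemma key_identity (n i : ℕ) (hi : 1 ≤ i) (hin : i ≤ n) (M : MS) (hM : IsMS n M) :
    M.countP (fun s => 1 ≤ s.1 ∧ s.1 ≤ i ∧ s.2 = i)
      + M.countP (fun s => s.1 = i ∧ i ≤ s.2 ∧ s.2 < i + n)
      + boxes M (i - 1) + boxes M (i + 1)
    = M.countP (fun s => s.1 ≤ i - 1 ∧ s.2 = i - 1)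
      + M.countP (fun s => s.1 = i + 1 ∧ i + 1 ≤ s.2 ∧ s.2 ≤ i + n)
      + 2 * boxes M i := by
  simp only [boxes_eq_countP]
  induction M using Multiset.induction with
  | empty => simp
  | cons a M ih =>
    have ha := hM a (Multiset.mem_cons_self a M)
    have hM' : IsMS n M := fun s hs => hM s (Multiset.mem_cons_of_mem hs)
    obtain ⟨x, y⟩ := a
    have IH := ih hM'
    simp only [Multiset.countP_cons]
    obtain ⟨h1, h2, h3⟩ := ha
    split_ifs <;> omega

end Aux


theorem stmt9 (n i : ℕ) (hi : 1 ≤ i) (hin : i ≤ n) (M : MS) (hM : IsMS n M)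
    (h : (epsStr (Si M i) : ℤ) + (epsStr (SiStar n M i) : ℤ) + wtPair M i = 0) :
    fM i M = fMStar n i M ∧ fM i M = M + {(i, i)} ∧ fMStar n i M = M + {(i, i)} := by
  have b1 := scan_balance (Si M i) [] []
  have b2 := scan_balance (SiStar n M i) [] []
  simp only [List.length_nil, add_zero] at b1 b2
  have b1' : epsStr (Si M i) + (Si M i).countP (fun p => p.1 == Br.cl)
      = urStr (Si M i) + (Si M i).countP (fun p => p.1 == Br.op) := b1
  have b2' : epsStr (SiStar n M i) + (SiStar n M i).countP (fun p => p.1 == Br.cl)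
      = urStr (SiStar n M i) + (SiStar n M i).countP (fun p => p.1 == Br.op) := b2
  rw [countP_op_Si M i hi, countP_cl_Si M i hi] at b1'
  rw [countP_op_SiStar n M i, countP_cl_SiStar n M i] at b2'
  have key := key_identity n i hi hin M hM
  simp only [boxes_eq_countP] at key
  rw [wtPair] at h
  simp only [boxes_eq_countP] at h
  have hu1 : urStr (Si M i) = 0 := by omega
  have hu2 : urStr (SiStar n M i) = 0 := by omega
  have e1 : (scan (Si M i)).1 = [] := List.length_eq_zero_iff.mp hu1
  have e2 : (scan (SiStar n M i)).1 = [] := List.length_eq_zero_iff.mp hu2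
  have l1 : lastCl (Si M i) = none := by rw [lastCl, e1]; rfl
  have l2 : lastCl (SiStar n M i) = none := by rw [lastCl, e2]; rfl
  have f1 : fM i M = M + {(i, i)} := by unfold fM; rw [l1]
  have f2 : fMStar n i M = M + {(i, i)} := by unfold fMStar; rw [l2]
  exact ⟨f1.trans f2.symm, f1, f2⟩
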